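/- Let t_0, ..., t_{2k} be distinct points on the circle S^1 = ℝ/2πℤ, no two equal or antipodal. For each i define α_i = ∏_{j ≠ i} sin(t_j − t_i), and define χ(t_i) to be the number of indices j such that t_j lies in the open arc (t_i + π, t_i) (traversed counterclockwise). Then all the numbers α_0, ..., α_{2k} have the same sign if and only if χ(t_i) = k for all i. -/

import Mathlib

noncomputable def SM (k : ℕ) (t : ℝ) : EuclideanSpace ℝ (Fin (2 * k)) :=
  WithLp.toLp 2 fun i => if i.val % 2 = 0 then Real.cos ((2 * ((i.val / 2 : ℕ) : ℝ) + 1) * t)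
           else Real.sin ((2 * ((i.val / 2 : ℕ) : ℝ) + 1) * t)

/-- Geodesic distance on the circle ℝ/2πℤ (total circumference 2π). -/
noncomputable def cdist (s t : ℝ) : ℝ := ‖((s - t : ℝ) : AddCircle (2 * Real.pi))‖

/-- `inArcPi a x` : the point `x` lies in the open counterclockwise arc `(a + π, a)` on ℝ/2πℤ. -/
def inArcPi (a x : ℝ) : Prop :=
  ∃ s : ℝ, 0 < s ∧ s < Real.pi ∧ ∃ m : ℤ, x = a + Real.pi + s + 2 * Real.pi * m
open Real Finset

lemma sin_neg_iff_aux {x : ℝ} (h1 : -(2*π) < x) (h2 : x < 2*π) :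
    Real.sin x < 0 ↔ (π < x ∨ (-π < x ∧ x < 0)) := by
  constructor
  · intro hs
    by_contra hc
    push_neg at hc
    obtain ⟨hc1, hc2⟩ := hc
    rcases le_or_gt 0 x with h0 | h0
    · exact absurd hs (not_lt.2 (Real.sin_nonneg_of_nonneg_of_le_pi h0 hc1))
    · have hx : x ≤ -π := by
        by_contra hh; push_neg at hh; exact absurd (hc2 hh) (not_le.2 h0)
      have h3 : 0 ≤ Real.sin (x + 2*π) :=
        Real.sin_nonneg_of_nonneg_of_le_pi (by linarith) (by linarith)
      rw [Real.sin_add_two_pi] at h3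
      linarith
  · rintro (hx | ⟨hx1, hx2⟩)
    · have h3 : 0 < Real.sin (x - π) := Real.sin_pos_of_pos_of_lt_pi (by linarith) (by linarith)
      rw [Real.sin_sub_pi] at h3
      linarith
    · have h3 : 0 < Real.sin (-x) := Real.sin_pos_of_pos_of_lt_pi (by linarith) (by linarith)
      rw [Real.sin_neg] at h3; linarith

lemma inArcPi_iff_sin (a x : ℝ) : inArcPi a x ↔ Real.sin (x - a) < 0 := by
  constructor
  · rintro ⟨s, hs0, hsπ, m, rfl⟩
    have hx : a + π + s + 2*π*m - a = (s + π) + m * (2*π) := by ring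
    rw [hx, Real.sin_add_int_mul_two_pi, Real.sin_add_pi]
    have := Real.sin_pos_of_pos_of_lt_pi hs0 hsπ
    linarith
  · intro hs
    set m : ℤ := ⌊(x - a)/(2*π)⌋ with hm
    set y : ℝ := x - a - 2*π*m with hy
    have h2π : (0:ℝ) < 2*π := by positivity
    have hy0 : 0 ≤ y := by
      have := Int.floor_le ((x - a)/(2*π))
      rw [hy]
      have : (m:ℝ) * (2*π) ≤ x - a := by
        rw [hm]; rw [← le_div_iff₀ h2π] at *; exact (Int.floor_le _)
      nlinarith
    have hy2 : y < 2*π := by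
      have h1 : (x - a)/(2*π) < m + 1 := Int.lt_floor_add_one _
      have : x - a < (m+1) * (2*π) := by
        rw [← div_lt_iff₀ h2π] at *; push_cast; linarith
      rw [hy]; nlinarith
    have hsy : Real.sin y = Real.sin (x - a) := by
      rw [hy, show x - a - 2*π*m = x - a - m * (2*π) by ring, Real.sin_sub_int_mul_two_pi]
    have hyπ : π < y := by
      by_contra hh
      push_neg at hh
      have := Real.sin_nonneg_of_nonneg_of_le_pi hy0 hh
      rw [hsy] at this; linarith
    exact ⟨y - π, by linarith, by linarith, m, by rw [hy]; ring⟩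

lemma prod_pos_iff_even_card {ι : Type*} [DecidableEq ι] (s : Finset ι) (f : ι → ℝ)
    (hf : ∀ j ∈ s, f j ≠ 0) :
    (0 < ∏ j ∈ s, f j) ↔ Even (s.filter (fun j => f j < 0)).card := by
  classical
  induction s using Finset.induction with
  | empty => simp
  | @insert a s ha ih =>
    have hfa : f a ≠ 0 := hf a (mem_insert_self _ _)
    have hfs : ∀ j ∈ s, f j ≠ 0 := fun j hj => hf j (mem_insert_of_mem hj)
    have hP : (∏ j ∈ s, f j) ≠ 0 := Finset.prod_ne_zero_iff.2 hfs
    rw [Finset.prod_insert ha, Finset.filter_insert]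
    rcases lt_or_gt_of_ne hfa with hneg | hpos
    · rw [if_pos hneg, Finset.card_insert_of_notMem (fun hmem => ha (Finset.mem_of_mem_filter _ hmem))]
      rw [Nat.even_add_one, ← ih hfs]
      constructor
      · intro h hpos'
        nlinarith
      · intro h
        rcases hP.lt_or_gt with h2 | h2
        · nlinarith
        · exact absurd h2 h
    · rw [if_neg (by exact not_lt.2 hpos.le), ← ih hfs]
      constructor
      · intro h
        nlinarith
      · intro h; exact mul_pos hpos h

noncomputable def chi {n : ℕ} (v : Fin n → ℝ) (i : Fin n) : ℕ :=
  (Finset.univ.filter (fun j => Real.sin (v j - v i) < 0)).card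

lemma core (k : ℕ) (v : Fin (2*k+1) → ℝ) (hm : StrictMono v)
    (hr : v (Fin.last (2*k)) < v 0 + 2*π)
    (h : ∀ j l : Fin (2*k+1), j ≠ l → ∀ m : ℤ, v l - v j ≠ m * π)
    (hpar : ∀ i j : Fin (2*k+1), chi v i % 2 = chi v j % 2) :
    ∀ i, chi v i = k := by
  classical
  have hπ : (0:ℝ) < π := Real.pi_pos
  have hlow : ∀ j : Fin (2*k+1), v 0 ≤ v j := fun j => hm.monotone (Fin.zero_le j)
  have hhigh : ∀ j : Fin (2*k+1), v j ≤ v (Fin.last (2*k)) := fun j => hm.monotone (Fin.le_last j)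
  have hbd : ∀ i j : Fin (2*k+1), -(2*π) < v j - v i ∧ v j - v i < 2*π := by
    intro i j
    constructor <;> [nlinarith [hlow j, hhigh i, hr]; nlinarith [hlow i, hhigh j, hr]]
  have hne : ∀ i j : Fin (2*k+1), v j ≠ v i + π := by
    intro i j hc
    rcases eq_or_ne i j with rfl | hij
    · linarith
    · exact h i j hij 1 (by rw [hc]; push_cast; ring)
  have hne' : ∀ i j : Fin (2*k+1), v j ≠ v i - π := by
    intro i j hc
    rcases eq_or_ne i j with rfl | hij
    · linarith
    · exact h i j hij (-1) (by rw [hc]; push_cast; ring)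
  have hsign : ∀ i j : Fin (2*k+1),
      (Real.sin (v j - v i) < 0 ↔ (v i + π < v j ∨ (v i - π < v j ∧ j < i))) := by
    intro i j
    rw [sin_neg_iff_aux (hbd i j).1 (hbd i j).2]
    constructor
    · rintro (h1 | ⟨h1, h2⟩)
      · exact Or.inl (by linarith)
      · exact Or.inr ⟨by linarith, hm.lt_iff_lt.1 (by linarith)⟩
    · rintro (h1 | ⟨h1, h2⟩)
      · exact Or.inl (by linarith)
      · exact Or.inr ⟨by linarith, by have := hm h2; linarith⟩
  -- E1
  have E1 : ∀ i : Fin (2*k+1), chi v i + (univ.filter (fun j => v j < v i - π)).card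
      = (univ.filter (fun j => v i + π < v j)).card + i.val := by
    intro i
    have hsplit : (univ.filter (fun j => Real.sin (v j - v i) < 0))
        = univ.filter (fun j => v i + π < v j) ∪ univ.filter (fun j => v i - π < v j ∧ j < i) := by
      rw [← Finset.filter_or]
      exact Finset.filter_congr (fun j _ => hsign i j)
    have hd1 : Disjoint (univ.filter (fun j => v i + π < v j))
        (univ.filter (fun j => v i - π < v j ∧ j < i)) := by
      rw [Finset.disjoint_left]
      intro j hj1 hj2
      simp only [mem_filter] at hj1 hj2
      have := hm hj2.2.2
      linarith
    have hchi : chi v i = (univ.filter (fun j => v i + π < v j)).card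
        + (univ.filter (fun j => v i - π < v j ∧ j < i)).card := by
      show (univ.filter (fun j => Real.sin (v j - v i) < 0)).card = _
      rw [hsplit, Finset.card_union_of_disjoint hd1]
    have hsplit2 : (univ.filter (fun j => j < i))
        = univ.filter (fun j => v i - π < v j ∧ j < i) ∪ univ.filter (fun j => v j < v i - π) := by
      rw [← Finset.filter_or]
      refine Finset.filter_congr (fun j _ => ?_)
      constructor
      · intro hj
        rcases lt_trichotomy (v j) (v i - π) with hc | hc | hc
        · exact Or.inr hc
        · exact absurd hc (hne' i j)
        · exact Or.inl ⟨hc, hj⟩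
      · rintro (⟨h1, h2⟩ | h1)
        · exact h2
        · exact hm.lt_iff_lt.1 (by linarith)
    have hd2 : Disjoint (univ.filter (fun j => v i - π < v j ∧ j < i))
        (univ.filter (fun j => v j < v i - π)) := by
      rw [Finset.disjoint_left]
      intro j hj1 hj2
      simp only [mem_filter] at hj1 hj2
      linarith [hj1.2.1, hj2.2]
    have hcard : (univ.filter (fun j => j < i)).card = i.val := by
      have he : (univ.filter (fun j => j < i)) = Finset.Iio i := by
        ext j; simp
      rw [he, Fin.card_Iio]
    have h3 : i.val = (univ.filter (fun j => v i - π < v j ∧ j < i)).card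
        + (univ.filter (fun j => v j < v i - π)).card := by
      rw [← hcard, hsplit2, Finset.card_union_of_disjoint hd2]
    omega
  -- strips
  set FA : Fin (2*k) → Finset (Fin (2*k+1)) :=
    fun i => univ.filter (fun j => v i.castSucc + π < v j ∧ v j < v i.succ + π) with hFA
  set FB : Fin (2*k) → Finset (Fin (2*k+1)) :=
    fun i => univ.filter (fun j => v i.castSucc - π < v j ∧ v j < v i.succ - π) with hFB
  -- E2
  have E2 : ∀ i : Fin (2*k),
      chi v i.succ + ((FA i).card + (FB i).card) = chi v i.castSucc + 1 := by
    intro i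
    have hII : v i.castSucc < v i.succ := hm Fin.castSucc_lt_succ
    have hg2 : univ.filter (fun j => v i.castSucc + π < v j)
        = univ.filter (fun j => v i.succ + π < v j) ∪ FA i := by
      rw [hFA, ← Finset.filter_or]
      refine Finset.filter_congr (fun j _ => ?_)
      constructor
      · intro hj
        rcases lt_trichotomy (v j) (v i.succ + π) with hc | hc | hc
        · exact Or.inr ⟨hj, hc⟩
        · exact absurd hc (hne i.succ j)
        · exact Or.inl hc
      · rintro (hj | ⟨hj, _⟩)
        · linarith
        · exact hj
    have hgd : Disjoint (univ.filter (fun j => v i.succ + π < v j)) (FA i) := by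
      rw [hFA, Finset.disjoint_left]
      intro j hj1 hj2
      simp only [mem_filter] at hj1 hj2
      linarith [hj1.2, hj2.2.2]
    have hgcard : (univ.filter (fun j => v i.castSucc + π < v j)).card
        = (univ.filter (fun j => v i.succ + π < v j)).card + (FA i).card := by
      rw [hg2, Finset.card_union_of_disjoint hgd]
    have hf2 : univ.filter (fun j => v j < v i.succ - π)
        = univ.filter (fun j => v j < v i.castSucc - π) ∪ FB i := by
      rw [hFB, ← Finset.filter_or]
      refine Finset.filter_congr (fun j _ => ?_)
      constructor
      · intro hj
        rcases lt_trichotomy (v j) (v i.castSucc - π) with hc | hc | hc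
        · exact Or.inl hc
        · exact absurd hc (hne' i.castSucc j)
        · exact Or.inr ⟨hc, hj⟩
      · rintro (hj | ⟨_, hj⟩)
        · linarith
        · exact hj
    have hfd : Disjoint (univ.filter (fun j => v j < v i.castSucc - π)) (FB i) := by
      rw [hFB, Finset.disjoint_left]
      intro j hj1 hj2
      simp only [mem_filter] at hj1 hj2
      linarith [hj1.2, hj2.2.1]
    have hfcard : (univ.filter (fun j => v j < v i.succ - π)).card
        = (univ.filter (fun j => v j < v i.castSucc - π)).card + (FB i).card := by
      rw [hf2, Finset.card_union_of_disjoint hfd]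
    have e1 := E1 i.castSucc
    have e2 := E1 i.succ
    have hval : (i.succ : Fin (2*k+1)).val = (i.castSucc : Fin (2*k+1)).val + 1 := by
      simp [Fin.val_succ, Fin.coe_castSucc]
    omega
  -- parity gives odd strips
  have hodd : ∀ i : Fin (2*k), ((FA i).card + (FB i).card) % 2 = 1 := by
    intro i
    have h1 := E2 i
    have h2 := hpar i.succ i.castSucc
    omega
  -- sum of strips bounded
  have hsum : ∑ i : Fin (2*k), ((FA i).card + (FB i).card) ≤ 2*k+1 := by
    have hABd : ∀ x y : Fin (2*k), ∀ j, j ∈ FA x → j ∈ FB y → False := by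
      intro x y j hjA hjB
      simp only [hFA, hFB, mem_filter, mem_univ, true_and] at hjA hjB
      have h1 : v 0 + π ≤ v x.castSucc + π := by linarith [hlow x.castSucc]
      have h2 : v y.succ ≤ v (Fin.last (2*k)) := hhigh y.succ
      linarith [hjA.1, hjB.2]
    have hAAd : ∀ x y : Fin (2*k), x < y → ∀ j, j ∈ FA x → j ∈ FA y → False := by
      intro x y hxy j hjA hjA'
      simp only [hFA, mem_filter, mem_univ, true_and] at hjA hjA'
      have hle : v x.succ ≤ v y.castSucc := by
        apply hm.monotone
        rw [Fin.le_def]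
        simp only [Fin.val_succ, Fin.coe_castSucc]
        exact Fin.lt_def.1 hxy
      linarith [hjA.2, hjA'.1]
    have hBBd : ∀ x y : Fin (2*k), x < y → ∀ j, j ∈ FB x → j ∈ FB y → False := by
      intro x y hxy j hjB hjB'
      simp only [hFB, mem_filter, mem_univ, true_and] at hjB hjB'
      have hle : v x.succ ≤ v y.castSucc := by
        apply hm.monotone
        rw [Fin.le_def]
        simp only [Fin.val_succ, Fin.coe_castSucc]
        exact Fin.lt_def.1 hxy
      linarith [hjB.2, hjB'.1]
    have hABsame : ∀ x : Fin (2*k), Disjoint (FA x) (FB x) := by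
      intro x; rw [Finset.disjoint_left]; intro j hj1 hj2; exact absurd (hABd x x j hj1 hj2) not_false
    have hdisj : ∀ x ∈ (univ : Finset (Fin (2*k))), ∀ y ∈ univ, x ≠ y →
        Disjoint (FA x ∪ FB x) (FA y ∪ FB y) := by
      intro x _ y _ hxy
      rw [Finset.disjoint_left]
      intro j hj1 hj2
      rw [Finset.mem_union] at hj1 hj2
      rcases lt_or_gt_of_ne hxy with hlt | hlt <;>
        rcases hj1 with hj1 | hj1 <;> rcases hj2 with hj2 | hj2
      exacts [hAAd x y hlt j hj1 hj2, hABd x y j hj1 hj2, hABd y x j hj2 hj1,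
        hBBd x y hlt j hj1 hj2, hAAd y x hlt j hj2 hj1, hABd x y j hj1 hj2,
        hABd y x j hj2 hj1, hBBd y x hlt j hj2 hj1]
    calc ∑ i : Fin (2*k), ((FA i).card + (FB i).card)
        = ∑ i : Fin (2*k), (FA i ∪ FB i).card := by
          refine Finset.sum_congr rfl (fun i _ => ?_)
          rw [Finset.card_union_of_disjoint (hABsame i)]
      _ = (univ.biUnion (fun i => FA i ∪ FB i)).card := (Finset.card_biUnion hdisj).symm
      _ ≤ (univ : Finset (Fin (2*k+1))).card := Finset.card_le_univ _
      _ = 2*k+1 := by simp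
  -- every strip has exactly one point
  have hone : ∀ i : Fin (2*k), (FA i).card + (FB i).card = 1 := by
    by_contra hc
    push_neg at hc
    obtain ⟨i0, hi0⟩ := hc
    have h3 : 3 ≤ (FA i0).card + (FB i0).card := by have := hodd i0; omega
    have h5 : ∑ i ∈ univ.erase i0, ((FA i).card + (FB i).card) + ((FA i0).card + (FB i0).card)
        = ∑ i : Fin (2*k), ((FA i).card + (FB i).card) :=
      Finset.sum_erase_add _ _ (mem_univ i0)
    have h6 : (univ.erase i0).card = 2*k - 1 := by
      rw [Finset.card_erase_of_mem (mem_univ i0)]; simp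
    have h4 : 2*k - 1 ≤ ∑ i ∈ univ.erase i0, ((FA i).card + (FB i).card) := by
      calc 2*k - 1 = ∑ _i ∈ univ.erase i0, 1 := by
            rw [Finset.sum_const, smul_eq_mul, mul_one, h6]
        _ ≤ ∑ i ∈ univ.erase i0, ((FA i).card + (FB i).card) :=
            Finset.sum_le_sum (fun x _ => by have := hodd x; omega)
    have hk : i0.val < 2*k := i0.2
    omega
  have hstep : ∀ i : Fin (2*k), chi v i.succ = chi v i.castSucc := by
    intro i
    have := E2 i
    have := hone i
    omega
  have hconst : ∀ i, chi v i = chi v 0 := by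
    intro i
    induction i using Fin.induction with
    | zero => rfl
    | succ i ih => rw [hstep i]; exact ih
  -- double counting
  have htot : ∑ i : Fin (2*k+1), chi v i = k * (2*k+1) := by
    have hc : ∀ i j : Fin (2*k+1),
        ((if Real.sin (v j - v i) < 0 then (1:ℕ) else 0)
          + (if Real.sin (v i - v j) < 0 then (1:ℕ) else 0)) = if i = j then 0 else 1 := by
      intro i j
      rcases eq_or_ne i j with rfl | hij
      · simp
      · have hnz : Real.sin (v j - v i) ≠ 0 := by
          intro hz
          rw [Real.sin_eq_zero_iff] at hz
          obtain ⟨n, hn⟩ := hz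
          exact h i j hij n hn.symm
        have hop : Real.sin (v i - v j) = - Real.sin (v j - v i) := by
          rw [show v i - v j = -(v j - v i) by ring, Real.sin_neg]
        rcases hnz.lt_or_gt with hlt | hlt
        · simp [hij, hlt, hop, not_lt.2 hlt.le, neg_pos.2 hlt, not_lt.2 (neg_pos.2 hlt).le]
        · simp [hij, not_lt.2 hlt.le, hop, neg_lt_zero.2 hlt]
    have hSdef : ∀ i, chi v i = ∑ j, if Real.sin (v j - v i) < 0 then (1:ℕ) else 0 := by
      intro i
      rw [chi, Finset.card_filter]
    have key : (∑ i : Fin (2*k+1), ∑ j : Fin (2*k+1),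
        ((if Real.sin (v j - v i) < 0 then (1:ℕ) else 0)
          + (if Real.sin (v i - v j) < 0 then (1:ℕ) else 0))) = 2 * (k * (2*k+1)) := by
      rw [Finset.sum_congr rfl (fun i _ => Finset.sum_congr rfl (fun j _ => hc i j))]
      have hrow : ∀ i : Fin (2*k+1), (∑ j : Fin (2*k+1), if i = j then (0:ℕ) else 1) = 2*k := by
        intro i
        have h1 : ((∑ j : Fin (2*k+1), if i = j then (0:ℕ) else 1)
            + ∑ j : Fin (2*k+1), if i = j then (1:ℕ) else 0) = 2*k+1 := by
          rw [← Finset.sum_add_distrib]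
          have : ∀ j : Fin (2*k+1),
              ((if i = j then (0:ℕ) else 1) + (if i = j then (1:ℕ) else 0)) = 1 := by
            intro j; split <;> rfl
          rw [Finset.sum_congr rfl (fun j _ => this j)]
          simp
        have h2 : (∑ j : Fin (2*k+1), if i = j then (1:ℕ) else 0) = 1 := by
          rw [Finset.sum_ite_eq]; simp
        omega
      rw [Finset.sum_congr rfl (fun i _ => hrow i), Finset.sum_const, Finset.card_univ,
        Fintype.card_fin, smul_eq_mul]
      ring
    have hsplit2 : (∑ i : Fin (2*k+1), ∑ j : Fin (2*k+1),
        ((if Real.sin (v j - v i) < 0 then (1:ℕ) else 0)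
          + (if Real.sin (v i - v j) < 0 then (1:ℕ) else 0)))
        = (∑ i : Fin (2*k+1), chi v i) + (∑ i : Fin (2*k+1), chi v i) := by
      have e1 : ∀ i : Fin (2*k+1), (∑ j : Fin (2*k+1),
          ((if Real.sin (v j - v i) < 0 then (1:ℕ) else 0)
            + (if Real.sin (v i - v j) < 0 then (1:ℕ) else 0)))
          = chi v i + ∑ j : Fin (2*k+1), (if Real.sin (v i - v j) < 0 then (1:ℕ) else 0) := by
        intro i
        rw [Finset.sum_add_distrib, ← hSdef i]
      rw [Finset.sum_congr rfl (fun i _ => e1 i), Finset.sum_add_distrib]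
      congr 1
      exact Finset.sum_comm.trans (Finset.sum_congr rfl (fun j _ => (hSdef j).symm))
    omega
  intro i
  rw [hconst i]
  have hfin : (2*k+1) * chi v 0 = k * (2*k+1) := by
    rw [← htot]
    rw [Finset.sum_congr rfl (fun i _ => hconst i), Finset.sum_const, Finset.card_univ,
      Fintype.card_fin, smul_eq_mul]
  rw [mul_comm k (2*k+1)] at hfin
  exact Nat.eq_of_mul_eq_mul_left (by omega) hfin
lemma core' (k : ℕ) (t : Fin (2*k+1) → ℝ)
    (h : ∀ j l : Fin (2*k+1), j ≠ l → ∀ m : ℤ, t l - t j ≠ m * π)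
    (hpar : ∀ i j : Fin (2*k+1), chi t i % 2 = chi t j % 2) :
    ∀ i, chi t i = k := by
  classical
  have hπ : (0:ℝ) < π := Real.pi_pos
  have h2π : (0:ℝ) < 2*π := by positivity
  set u : Fin (2*k+1) → ℝ := fun j => t j - 2*π * ⌊(t j - t 0)/(2*π)⌋ with hu
  have husin : ∀ i j, Real.sin (u j - u i) = Real.sin (t j - t i) := by
    intro i j
    have he : u j - u i
        = (t j - t i) + ((⌊(t i - t 0)/(2*π)⌋ - ⌊(t j - t 0)/(2*π)⌋ : ℤ)) * (2*π) := by
      rw [hu]; push_cast; ring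
    rw [he, Real.sin_add_int_mul_two_pi]
  have hna : ∀ j l : Fin (2*k+1), j ≠ l → ∀ m : ℤ, u l - u j ≠ m * π := by
    intro j l hjl m hc
    apply h j l hjl (m + 2*(⌊(t l - t 0)/(2*π)⌋ - ⌊(t j - t 0)/(2*π)⌋))
    have he : u l - u j
        = (t l - t j) + ((⌊(t j - t 0)/(2*π)⌋ - ⌊(t l - t 0)/(2*π)⌋ : ℤ)) * (2*π) := by
      rw [hu]; push_cast; ring
    rw [he] at hc
    push_cast
    push_cast at hc
    linarith
  have huinj : Function.Injective u := by
    intro i j hij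
    by_contra hne
    exact hna i j hne 0 (by rw [hij]; push_cast; ring)
  have hrange : ∀ j, t 0 ≤ u j ∧ u j < t 0 + 2*π := by
    intro j
    have h1 : (⌊(t j - t 0)/(2*π)⌋ : ℝ) ≤ (t j - t 0)/(2*π) := Int.floor_le _
    have h2 : (t j - t 0)/(2*π) < ⌊(t j - t 0)/(2*π)⌋ + 1 := Int.lt_floor_add_one _
    rw [le_div_iff₀ h2π] at h1
    rw [div_lt_iff₀ h2π] at h2
    constructor
    · rw [hu]; simp only; nlinarith
    · rw [hu]; simp only; nlinarith
  set σ : Equiv.Perm (Fin (2*k+1)) := Tuple.sort u with hσ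
  set v : Fin (2*k+1) → ℝ := u ∘ σ with hv
  have hvmono : StrictMono v :=
    (Tuple.monotone_sort u).strictMono_of_injective (huinj.comp σ.injective)
  have hvr : v (Fin.last (2*k)) < v 0 + 2*π := by
    have := (hrange (σ (Fin.last (2*k)))).2
    have := (hrange (σ 0)).1
    show u (σ (Fin.last (2*k))) < u (σ 0) + 2*π
    linarith
  have hvna : ∀ j l : Fin (2*k+1), j ≠ l → ∀ m : ℤ, v l - v j ≠ m * π := by
    intro j l hjl m
    exact hna (σ j) (σ l) (fun e => hjl (σ.injective e)) m
  have hut : ∀ i, chi u i = chi t i := by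
    intro i
    show (univ.filter (fun j => Real.sin (u j - u i) < 0)).card = _
    congr 1
    exact Finset.filter_congr (fun j _ => by rw [husin i j])
  have hvu : ∀ i, chi v i = chi u (σ i) := by
    intro i
    apply Finset.card_bij (fun j _ => σ j)
    · intro a ha
      simp only [mem_filter, mem_univ, true_and] at ha ⊢
      exact ha
    · intro a _ b _ hab
      exact σ.injective hab
    · intro b hb
      refine ⟨σ.symm b, ?_, by simp⟩
      simp only [mem_filter, mem_univ, true_and] at hb ⊢
      show Real.sin (u (σ (σ.symm b)) - u (σ i)) < 0
      rwa [Equiv.apply_symm_apply]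
  have hvpar : ∀ i j : Fin (2*k+1), chi v i % 2 = chi v j % 2 := by
    intro i j
    rw [hvu i, hvu j, hut, hut]
    exact hpar (σ i) (σ j)
  have hvk := core k v hvmono hvr hvna hvpar
  intro i
  have : chi v (σ.symm i) = k := hvk _
  rwa [hvu, Equiv.apply_symm_apply, hut] at this
theorem alpha_same_sign_iff (k : ℕ) (t : Fin (2 * k + 1) → ℝ)
    (h : ∀ j l : Fin (2 * k + 1), j ≠ l → ∀ m : ℤ, t l - t j ≠ m * Real.pi) :
    ((∀ i, 0 < ∏ j ∈ Finset.univ.filter (fun j => j ≠ i), Real.sin (t j - t i)) ∨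
     (∀ i, (∏ j ∈ Finset.univ.filter (fun j => j ≠ i), Real.sin (t j - t i)) < 0)) ↔
    (∀ i, {j : Fin (2 * k + 1) | inArcPi (t i) (t j)}.ncard = k) := by
  classical
  have hπ : (0:ℝ) < π := Real.pi_pos
  have hsin0 : ∀ i j : Fin (2*k+1), Real.sin (t j - t i) < 0 → j ≠ i := by
    intro i j hs he
    subst he
    simp at hs
  have hncard : ∀ i, {j | inArcPi (t i) (t j)}.ncard = chi t i := by
    intro i
    have he : {j | inArcPi (t i) (t j)}
        = ↑(univ.filter (fun j => Real.sin (t j - t i) < 0)) := by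
      ext j
      simp only [Set.mem_setOf_eq, Finset.coe_filter, mem_univ, true_and,
        inArcPi_iff_sin]
    rw [he, Set.ncard_coe_finset]
    rfl
  have hnz : ∀ i : Fin (2*k+1), ∀ j ∈ univ.filter (fun j => j ≠ i),
      Real.sin (t j - t i) ≠ 0 := by
    intro i j hj hz
    rw [Real.sin_eq_zero_iff] at hz
    obtain ⟨n, hn⟩ := hz
    exact h i j (Ne.symm (Finset.mem_filter.1 hj).2) n hn.symm
  have hfeq : ∀ i : Fin (2*k+1),
      (univ.filter (fun j => j ≠ i)).filter (fun j => Real.sin (t j - t i) < 0)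
        = univ.filter (fun j => Real.sin (t j - t i) < 0) := by
    intro i
    rw [Finset.filter_filter]
    exact Finset.filter_congr (fun j _ =>
      ⟨fun hj => hj.2, fun hj => ⟨hsin0 i j hj, hj⟩⟩)
  have hpos_iff : ∀ i, (0 < ∏ j ∈ univ.filter (fun j => j ≠ i), Real.sin (t j - t i))
      ↔ Even (chi t i) := by
    intro i
    rw [prod_pos_iff_even_card _ _ (hnz i), hfeq i]
    rfl
  have hneg_iff : ∀ i, ((∏ j ∈ univ.filter (fun j => j ≠ i), Real.sin (t j - t i)) < 0)
      ↔ ¬ Even (chi t i) := by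
    intro i
    have hprodnz : (∏ j ∈ univ.filter (fun j => j ≠ i), Real.sin (t j - t i)) ≠ 0 :=
      Finset.prod_ne_zero_iff.2 (hnz i)
    rw [← hpos_iff i]
    constructor
    · intro hlt hpos; linarith
    · intro hnp
      rcases hprodnz.lt_or_gt with hlt | hlt
      · exact hlt
      · exact absurd hlt hnp
  constructor
  · rintro (hp | hn)
    · intro i
      rw [hncard i]
      refine core' k t h (fun i' j' => ?_) i
      have h1 := (hpos_iff i').1 (hp i')
      have h2 := (hpos_iff j').1 (hp j')
      rw [Nat.even_iff] at h1 h2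
      omega
    · intro i
      rw [hncard i]
      refine core' k t h (fun i' j' => ?_) i
      have h1 := (hneg_iff i').1 (hn i')
      have h2 := (hneg_iff j').1 (hn j')
      rw [Nat.not_even_iff] at h1 h2
      omega
  · intro hk
    have hchik : ∀ i, chi t i = k := by
      intro i
      rw [← hncard i]
      exact hk i
    rcases Nat.even_or_odd k with he | ho
    · left
      intro i
      exact (hpos_iff i).2 (by rw [hchik i]; exact he)
    · right
      intro i
      refine (hneg_iff i).2 ?_
      rw [hchik i]
      exact (Nat.not_even_iff_odd).2 ho
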